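/- arXiv:2604.09309 — 7 statements merged into one kernel-verified Lean document; each statement's English description precedes it below -/
import Mathlib

section
/- Parent-Sibling Separation implies full HTC-identifiability: let G = (V, D, B) be a mixed graph (with D acyclic). If pa(i) ∩ sib(i) = ∅ for every vertex i ∈ V, then every directed edge j → i of G is HTC-identifiable. (The witness set is W = pa(i) with the trivial half-trek from each parent to itself.) -/
/-- A mixed graph: a set `D` of directed edges and a set `B` of bidirected
edges on the vertex type `V`. Acyclicity of `D` (irreflexivity of its
transitive closure), symmetry and irreflexivity of `B` are taken as
hypotheses of the theorems below. -/
structure MixedGraph (V : Type*) where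
  /-- directed edges: `D j i` means `j → i` -/
  D : V → V → Prop
  /-- bidirected edges: `B i j` means `i ↔ j` -/
  B : V → V → Prop

namespace MixedGraph

variable {V : Type*}

/-- Parents of `i`: `pa(i) = {j : (j,i) ∈ D}`. -/
def pa (G : MixedGraph V) (i : V) : Set V := {j | G.D j i}

/-- Siblings of `i`: `sib(i) = {j : (i,j) ∈ B}`. -/
def sib (G : MixedGraph V) (i : V) : Set V := {j | G.B i j}

/-- Descendants of `i`: vertices reachable from `i` by a directed path of
length ≥ 1. -/
def desc (G : MixedGraph V) (i : V) : Set V := {w | Relation.TransGen G.D i w}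

/-- A half-trek from `v` to `w` with left side `L`: either a directed path
(possibly of length 0) from `v` to `w`, with left side `{v}`, or a bidirected
edge `v ↔ s` followed by a directed path from `s` to `w`, with left side
`{v, s}`. -/
def IsHalfTrek (G : MixedGraph V) (v w : V) (L : Set V) : Prop :=
  (Relation.ReflTransGen G.D v w ∧ L = {v}) ∨
  (∃ s, G.B v s ∧ Relation.ReflTransGen G.D s w ∧ L = ({v, s} : Set V))

/-- A directed edge `j → i` is HTC-identifiable if there is a set
`W ⊆ V \ {i}` with `|W| = |pa(i)|` (witnessed by a bijection `σ : W ≃ pa(i)`)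
and a system of half-treks from each `w ∈ W` to `σ w` whose left sides are
pairwise disjoint and disjoint from `sib(i)`. -/
def HTCIdentifiable (G : MixedGraph V) (j i : V) : Prop :=
  G.D j i ∧
  ∃ W : Set V, i ∉ W ∧
    ∃ (σ : ↥W ≃ ↥(G.pa i)) (Lf : ↥W → Set V),
      (∀ w : ↥W, G.IsHalfTrek w.1 (σ w).1 (Lf w)) ∧
      (∀ w₁ w₂ : ↥W, w₁ ≠ w₂ → Disjoint (Lf w₁) (Lf w₂)) ∧
      (∀ w : ↥W, Disjoint (Lf w) (G.sib i))

end MixedGraph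

/-- **Parent-Sibling Separation implies full HTC-identifiability.**
Let `G = (V, D, B)` be a mixed graph with `D` acyclic.  If
`pa(i) ∩ sib(i) = ∅` for every vertex `i ∈ V`, then every directed edge
`j → i` of `G` is HTC-identifiable (the witness set is `W = pa(i)` with the
trivial half-trek from each parent to itself). -/
theorem parent_sibling_separation_implies_htc {V : Type*} [Fintype V]
    (G : MixedGraph V)
    (hacyc : Irreflexive (Relation.TransGen G.D))
    (hsymm : Symmetric G.B) (hirrefl : Irreflexive G.B)
    (hsep : ∀ i : V, G.pa i ∩ G.sib i = ∅) :
    ∀ j i : V, G.D j i → G.HTCIdentifiable j i := by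
  intro j i hji
  refine ⟨hji, G.pa i, ?_, Equiv.refl _, fun w => {w.1}, ?_, ?_, ?_⟩
  · intro hi
    exact hacyc i (Relation.TransGen.single hi)
  · intro w
    exact Or.inl ⟨Relation.ReflTransGen.refl, rfl⟩
  · intro w₁ w₂ hne
    simp only [Set.disjoint_singleton_left, Set.mem_singleton_iff]
    exact fun h => hne (Subtype.ext h)
  · intro w
    rw [Set.disjoint_singleton_left]
    intro hw
    have := hsep i
    exact Set.eq_empty_iff_forall_notMem.mp this w.1 ⟨w.2, hw⟩
end

section
/- Subsumption of Ancestor Decomposition: let G = (V, D, B) be a mixed graph (with D acyclic) and i ∈ V. If a directed edge j → i is HTC-identifiable in the ancestral subgraph G_anc(i) (the mixed graph induced on the set anc(i) of ancestors of i, including i), then j → i is HTC-identifiable in the full graph G. Hence every edge identifiable by ancestor decomposition followed by HTC is already HTC-identifiable in G. -/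
namespace MixedGraph

/-- Ancestors of `i`: vertices from which `i` is reachable by a directed path
(including `i` itself). -/
def anc (G : MixedGraph V) (i : V) : Set V := {v | Relation.ReflTransGen G.D v i}

/-- The induced mixed subgraph on a set `S` of vertices: the directed and
bidirected edges are those of `G` with both endpoints in `S`. -/
def induced (G : MixedGraph V) (S : Set V) : MixedGraph S where
  D a b := G.D a.1 b.1
  B a b := G.B a.1 b.1

end MixedGraph

/-!
A half-trek system in `G_anc(i)` is, after forgetting that its vertices lie in `anc(i)`, a
half-trek system in `G`: edges of the induced subgraph are edges of `G`, every parent of `i` lies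
in `anc(i)`, and the siblings of `i` in the subgraph are its siblings in `G` lying in `anc(i)`,
so left sides inside `anc(i)` that avoid the former also avoid the latter.
-/

namespace MixedGraph

variable {V : Type*} {G : MixedGraph V} {S : Set V}

theorem pa_subset_anc (G : MixedGraph V) (i : V) : G.pa i ⊆ G.anc i :=
  fun _ hj => Relation.ReflTransGen.single hj

theorem IsHalfTrek.image_val {v w : S} {L : Set S} (h : (G.induced S).IsHalfTrek v w L) :
    G.IsHalfTrek v w (Subtype.val '' L) := by
  have lift_path : ∀ {a b : S}, Relation.ReflTransGen (G.induced S).D a b →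
      Relation.ReflTransGen G.D a b :=
    fun hab => hab.lift Subtype.val fun _ _ h => h
  rcases h with ⟨hpath, rfl⟩ | ⟨s, hB, hpath, rfl⟩
  · exact Or.inl ⟨lift_path hpath, Set.image_singleton⟩
  · refine Or.inr ⟨s, hB, lift_path hpath, ?_⟩
    rw [Set.image_insert_eq, Set.image_singleton]

def paInducedEquiv {i : S} (hpa : G.pa i ⊆ S) : (G.induced S).pa i ≃ G.pa i where
  toFun p := ⟨p.1.1, p.2⟩
  invFun p := ⟨⟨p.1, hpa p.2⟩, p.2⟩

theorem HTCIdentifiable.of_induced {j i : S} (hpa : G.pa i ⊆ S)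
    (h : (G.induced S).HTCIdentifiable j i) : G.HTCIdentifiable j i := by
  obtain ⟨hD, W, hiW, σ, Lf, hHT, hdisj, hsib⟩ := h
  let e := Equiv.Set.image Subtype.val W Subtype.val_injective
  have he : ∀ w, ((e.symm w : S) : V) = w := fun w => congrArg Subtype.val (e.apply_symm_apply w)
  refine ⟨hD, Subtype.val '' W, fun ⟨w, hwW, hw⟩ => hiW (Subtype.ext hw ▸ hwW),
    e.symm.trans (σ.trans (paInducedEquiv hpa)), fun w => Subtype.val '' Lf (e.symm w),
    fun w => ?_, fun w₁ w₂ hne => ?_, fun w => ?_⟩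
  · exact he w ▸ (hHT (e.symm w)).image_val
  · exact (Set.disjoint_image_iff Subtype.val_injective).mpr
      (hdisj _ _ (e.symm.injective.ne hne))
  · exact Set.disjoint_image_left.mpr (hsib (e.symm w))

end MixedGraph

theorem ancestor_decomposition_subsumed_general {V : Type*}
    (G : MixedGraph V)
    (j i : V) (hD : G.D j i)
    (h : (G.induced (G.anc i)).HTCIdentifiable
      ⟨j, Relation.ReflTransGen.single hD⟩ ⟨i, Relation.ReflTransGen.refl⟩) :
    G.HTCIdentifiable j i :=
  h.of_induced (G.pa_subset_anc i)

/-- **Subsumption of Ancestor Decomposition.**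
Let `G = (V, D, B)` be a mixed graph with `D` acyclic and `i ∈ V`.  If a
directed edge `j → i` is HTC-identifiable in the ancestral subgraph
`G_anc(i)` (the mixed graph induced on the set `anc(i)` of ancestors of `i`,
including `i`), then `j → i` is HTC-identifiable in the full graph `G`.
Hence every edge identifiable by ancestor decomposition followed by HTC is
already HTC-identifiable in `G`. -/
theorem ancestor_decomposition_subsumed {V : Type*} [Fintype V]
    (G : MixedGraph V)
    (hacyc : Irreflexive (Relation.TransGen G.D))
    (hsymm : Symmetric G.B) (hirrefl : Irreflexive G.B)
    (j i : V) (hD : G.D j i)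
    (h : (G.induced (G.anc i)).HTCIdentifiable
      ⟨j, Relation.ReflTransGen.single hD⟩ ⟨i, Relation.ReflTransGen.refl⟩) :
    G.HTCIdentifiable j i :=
  ancestor_decomposition_subsumed_general G j i hD h
end

section
/- Path-sum formula for the reduced-form matrix: let V be a finite type, R a relation on V whose transitive closure is irreflexive, and M a V×V real matrix supported on R. Then for all u, v ∈ V, the entry ((1 − M)⁻¹)_{u v} equals the sum, over all R-paths from u to v, of the weights of those paths (the empty path at u contributing 1 when u = v). -/
open Finset

section Aux

variable {V : Type*} [Fintype V] [DecidableEq V]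

/-- Finset of lists `l` of length `k` such that `(u :: l)` ends at `v`. -/
def pathFinset : ℕ → V → V → Finset (List V)
  | 0, u, v => if u = v then {([] : List V)} else ∅
  | (k+1), _, v => Finset.univ.biUnion (fun x => (pathFinset k x v).image (List.cons x))

lemma mem_pathFinset : ∀ (k : ℕ) (u v : V) (l : List V),
    l ∈ pathFinset k u v ↔ l.length = k ∧ (u :: l).getLast (List.cons_ne_nil u l) = v
  | 0, u, v, l => by
    constructor
    · intro h
      simp only [pathFinset] at h
      split_ifs at h with huv
      · simp only [Finset.mem_singleton] at h
        subst h; simpa using huv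
      · simp at h
    · rintro ⟨h1, h2⟩
      have : l = [] := List.length_eq_zero_iff.mp h1
      subst this
      simp only [List.getLast_singleton] at h2
      simp [pathFinset, h2]
  | (k+1), u, v, l => by
    simp only [pathFinset, Finset.mem_biUnion, Finset.mem_image, Finset.mem_univ, true_and]
    constructor
    · rintro ⟨x, m, hm, rfl⟩
      rw [mem_pathFinset] at hm
      refine ⟨by simp [hm.1], ?_⟩
      rw [List.getLast_cons (List.cons_ne_nil x m)]
      exact hm.2
    · rintro ⟨h1, h2⟩
      cases l with
      | nil => simp at h1
      | cons x m =>
        refine ⟨x, m, ?_, rfl⟩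
        rw [mem_pathFinset]
        refine ⟨by simpa using h1, ?_⟩
        rw [List.getLast_cons (List.cons_ne_nil x m)] at h2
        exact h2

/-- weight of a path. -/
def pweight (M : Matrix V V ℝ) (u : V) (l : List V) : ℝ :=
  (((u :: l).zip l).map (fun p => M p.1 p.2)).prod

@[simp] lemma pweight_nil (M : Matrix V V ℝ) (u : V) : pweight M u [] = 1 := by
  simp [pweight]

lemma pweight_cons (M : Matrix V V ℝ) (u x : V) (l : List V) :
    pweight M u (x :: l) = M u x * pweight M x l := by
  simp [pweight, List.zip_cons_cons]

lemma pow_apply_eq (M : Matrix V V ℝ) (k : ℕ) (u v : V) :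
    (M ^ k) u v = ∑ l ∈ pathFinset k u v, pweight M u l := by
  induction k generalizing u with
  | zero =>
    simp only [pow_zero, Matrix.one_apply, pathFinset]
    split_ifs with h <;> simp
  | succ k ih =>
    rw [pow_succ', Matrix.mul_apply]
    simp only [pathFinset]
    rw [Finset.sum_biUnion]
    · refine Finset.sum_congr rfl fun x _ => ?_
      rw [Finset.sum_image (fun a _ b _ h => by injection h : ∀ a ∈ pathFinset k x v, ∀ b ∈ pathFinset k x v, x :: a = x :: b → a = b)]
      rw [ih]
      rw [Finset.mul_sum]
      exact Finset.sum_congr rfl fun l _ => (pweight_cons M u x l).symm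
    · intro x _ y _ hxy
      simp only [Function.onFun, Finset.disjoint_left, Finset.mem_image]
      rintro a ⟨m, _, rfl⟩ ⟨m', _, h⟩
      injection h with h1 _
      exact hxy h1.symm

variable {R : V → V → Prop}

lemma pweight_support {M : Matrix V V ℝ} (hsupp : ∀ u v : V, M u v ≠ 0 → R u v) :
    ∀ (l : List V) (u : V), pweight M u l ≠ 0 → List.Chain R u l
  | [], _, _ => List.Chain.nil
  | (x :: l), u, h => by
    rw [pweight_cons] at h
    exact List.Chain.cons (hsupp _ _ (left_ne_zero_of_mul h))
      (pweight_support hsupp l x (right_ne_zero_of_mul h))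

lemma chain'_transGen {l : List V} (h : l.Chain' R) :
    ∀ (j : ℕ) (hj : j < l.length) (i : ℕ) (hi : i < j),
      Relation.TransGen R (l.get ⟨i, hi.trans hj⟩) (l.get ⟨j, hj⟩) := by
  intro j
  induction j with
  | zero => omega
  | succ j ih =>
    intro hj i hi
    have hstep : R (l.get ⟨j, by omega⟩) (l.get ⟨j + 1, hj⟩) :=
      List.isChain_iff_getElem.mp h j (by omega)
    rcases Nat.lt_succ_iff_lt_or_eq.mp hi with h' | rfl
    · exact (ih (by omega) i h').tail hstep
    · exact Relation.TransGen.single hstep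

lemma chain_length_lt (hacyc : Irreflexive (Relation.TransGen R))
    {u : V} {l : List V} (h : List.Chain R u l) : l.length < Fintype.card V := by
  by_contra hlen
  push_neg at hlen
  set L := u :: l with hL
  have hc : L.Chain' R := h
  have hcard : Fintype.card V < Fintype.card (Fin L.length) := by
    simp [hL, Nat.lt_succ_iff, hlen]
  obtain ⟨i, j, hne, hij⟩ := Fintype.exists_ne_map_eq_of_card_lt (fun i : Fin L.length => L.get i) hcard
  rcases Ne.lt_or_gt hne with hlt | hlt
  · exact hacyc _ (hij ▸ chain'_transGen hc j j.2 i hlt)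
  · exact hacyc _ (hij ▸ chain'_transGen hc i i.2 j hlt)

end Aux

/-- **Path-sum formula for the reduced-form matrix.**
Let `V` be a finite type, `R` a relation on `V` whose transitive closure is
irreflexive, and `M` a `V×V` real matrix supported on `R`.  Then for all
`u, v ∈ V`, the entry `((1 - M)⁻¹) u v` equals the sum, over all `R`-paths
from `u` to `v`, of the weights of those paths.  Here an `R`-path from `u` to
`v` is encoded by the list `l` of its vertices after `u`, i.e. the full vertex
sequence is `u :: l`, subject to `List.Chain R u l` and last vertex `v`; its
weight is the product of `M` over consecutive pairs of `u :: l` (the empty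
path at `u`, `l = []`, contributing `1` when `u = v`).  There are finitely
many such paths since `R` is acyclic, so the finsum `∑ᶠ` is the honest sum. -/
theorem reduced_form_path_sum {V : Type*} [Fintype V] [DecidableEq V]
    (R : V → V → Prop) (hacyc : Irreflexive (Relation.TransGen R))
    (M : Matrix V V ℝ) (hsupp : ∀ u v : V, M u v ≠ 0 → R u v)
    (u v : V) :
    (1 - M)⁻¹ u v =
      ∑ᶠ l ∈ {l : List V | List.Chain R u l ∧
          (u :: l).getLast (List.cons_ne_nil u l) = v},
        (((u :: l).zip l).map (fun p => M p.1 p.2)).prod := by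

  set n := Fintype.card V with hn
  -- nilpotency
  have hMn : M ^ n = 0 := by
    ext a b
    rw [pow_apply_eq]
    simp only [Matrix.zero_apply]
    refine Finset.sum_eq_zero fun l hl => ?_
    by_contra hw
    have hchain := pweight_support hsupp l a hw
    have := chain_length_lt hacyc hchain
    rw [(mem_pathFinset n a b l).mp hl |>.1] at this
    omega
  -- inverse = geometric sum
  have hinv : (1 - M)⁻¹ = ∑ k ∈ range n, M ^ k := by
    apply Matrix.inv_eq_right_inv
    have h2 : (1 - M) * ∑ k ∈ range n, M ^ k = -((M - 1) * ∑ k ∈ range n, M ^ k) := by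
      rw [← neg_mul, neg_sub]
    rw [mul_geom_sum, hMn] at h2
    rw [h2]; norm_num
  rw [hinv]
  -- entry of the sum
  have hentry : (∑ k ∈ range n, M ^ k) u v
      = ∑ l ∈ (range n).biUnion (fun k => pathFinset k u v), pweight M u l := by
    rw [Finset.sum_biUnion]
    · rw [Matrix.sum_apply]
      exact Finset.sum_congr rfl fun k _ => pow_apply_eq M k u v
    · intro i _ j _ hij
      simp only [Function.onFun, Finset.disjoint_left]
      intro l hl hl'
      rw [mem_pathFinset] at hl hl'
      exact hij (hl.1 ▸ hl'.1 ▸ rfl)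
  rw [hentry]
  symm
  apply finsum_mem_eq_sum_of_inter_support_eq
  ext l
  simp only [Set.mem_inter_iff, Set.mem_setOf_eq, Function.mem_support, Finset.coe_biUnion,
    Finset.coe_sort_coe, Set.mem_iUnion, Finset.mem_coe, Finset.mem_range, mem_pathFinset]
  constructor
  · rintro ⟨⟨hchain, hlast⟩, hw⟩
    exact ⟨⟨l.length, chain_length_lt hacyc hchain, rfl, hlast⟩, hw⟩
  · rintro ⟨⟨k, _, _, hlast⟩, hw⟩
    exact ⟨⟨pweight_support hsupp l u hw, hlast⟩, hw⟩
end

section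
/- Vanishing of reduced-form entries outside reachability: let V be a finite type, R a relation on V whose transitive closure is irreflexive, and M a V×V real matrix supported on R. Then for every u ∈ V, ((1 − M)⁻¹)_{u u} = 1, and for all u ≠ v with no R-path of length ≥ 1 from u to v (v is not reachable from u in the transitive closure of R), ((1 − M)⁻¹)_{u v} = 0. -/
/-! Since `M` is supported on `R`, a nonzero entry `(M ^ k) u v` yields an `R`-chain of length `k`
from `u` to `v`. Acyclicity makes such chains injective, so `M ^ card V = 0` and
`(1 - M)⁻¹ = ∑_{k < card V} M ^ k`. Every term with `k ≠ 0` vanishes at `(u, v)` unless `v` is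
reachable from `u`, so there `(1 - M)⁻¹` agrees with the identity; acyclicity covers `u = v`. -/

theorem List.length_le_card_of_isChain {V : Type*} [Fintype V] {R : V → V → Prop}
    [Std.Irrefl (Relation.TransGen R)] {l : List V} (hl : l.IsChain R) :
    l.length ≤ Fintype.card V :=
  (List.isChain_iff_pairwise.mp (hl.imp fun _ _ => Relation.TransGen.single (r := R))).nodup
    |>.length_le_card

theorem Matrix.inv_one_sub_eq_sum_pow {n α : Type*} [Fintype n] [DecidableEq n] [CommRing α]
    {M : Matrix n n α} {k : ℕ} (hM : M ^ k = 0) :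
    (1 - M)⁻¹ = ∑ i ∈ Finset.range k, M ^ i :=
  Matrix.inv_eq_right_inv (by rw [mul_neg_geom_sum, hM, sub_zero])

namespace Matrix

variable {V α : Type*} [Fintype V] [DecidableEq V] {R : V → V → Prop}

section Semiring

variable [Semiring α] {M : Matrix V V α}

theorem exists_isChain_of_pow_apply_ne_zero (hsupp : ∀ u v : V, M u v ≠ 0 → R u v) {k : ℕ}
    {u v : V} (h : (M ^ k) u v ≠ 0) : ∃ l : List V, (u :: l).IsChain R ∧ l.length = k := by
  induction k generalizing u with
  | zero => exact ⟨[], List.isChain_singleton u, rfl⟩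
  | succ k ih =>
    rw [pow_succ', mul_apply] at h
    obtain ⟨w, -, hw⟩ := Finset.exists_ne_zero_of_sum_ne_zero h
    obtain ⟨l, hl, hlen⟩ := ih (right_ne_zero_of_mul hw)
    exact ⟨w :: l, hl.cons (by simpa using hsupp _ _ (left_ne_zero_of_mul hw)), by simp [hlen]⟩

theorem pow_card_eq_zero_of_support [Std.Irrefl (Relation.TransGen R)]
    (hsupp : ∀ u v : V, M u v ≠ 0 → R u v) : M ^ Fintype.card V = 0 := by
  ext u v
  by_contra h
  obtain ⟨l, hl, hlen⟩ := exists_isChain_of_pow_apply_ne_zero hsupp h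
  have := List.length_le_card_of_isChain hl
  simp only [List.length_cons] at this
  omega

theorem transGen_of_pow_apply_ne_zero (hsupp : ∀ u v : V, M u v ≠ 0 → R u v) {k : ℕ}
    (hk : k ≠ 0) {u v : V} (h : (M ^ k) u v ≠ 0) : Relation.TransGen R u v := by
  induction k generalizing v with
  | zero => exact absurd rfl hk
  | succ k ih =>
    rw [pow_succ, mul_apply] at h
    obtain ⟨w, -, hw⟩ := Finset.exists_ne_zero_of_sum_ne_zero h
    have hwv := hsupp _ _ (right_ne_zero_of_mul hw)
    rcases eq_or_ne k 0 with rfl | hk'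
    · obtain rfl : u = w := by
        by_contra hne
        exact hw (by rw [pow_zero, one_apply_ne hne, zero_mul])
      exact .single hwv
    · exact (ih hk' (left_ne_zero_of_mul hw)).tail hwv

end Semiring

theorem inv_one_sub_apply_of_not_transGen [CommRing α] {M : Matrix V V α}
    [Std.Irrefl (Relation.TransGen R)] (hsupp : ∀ u v : V, M u v ≠ 0 → R u v) {u v : V}
    (huv : ¬ Relation.TransGen R u v) : (1 - M)⁻¹ u v = (1 : Matrix V V α) u v := by
  have hcard : 0 ∈ Finset.range (Fintype.card V) :=
    Finset.mem_range.mpr (Fintype.card_pos_iff.mpr ⟨u⟩)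
  rw [inv_one_sub_eq_sum_pow (pow_card_eq_zero_of_support hsupp), sum_apply,
    Finset.sum_eq_single_of_mem 0 hcard, pow_zero]
  intro k _ hk
  by_contra h
  exact huv (transGen_of_pow_apply_ne_zero hsupp hk h)

end Matrix

/-- **Vanishing of reduced-form entries outside reachability.**
Let `V` be a finite type, `R` a relation on `V` whose transitive closure is
irreflexive, and `M` a `V×V` real matrix supported on `R`.  Then for every
`u ∈ V`, `((1 - M)⁻¹) u u = 1`, and for all `u ≠ v` with no `R`-path of
length ≥ 1 from `u` to `v` (i.e. `v` is not reachable from `u` in the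
transitive closure of `R`), `((1 - M)⁻¹) u v = 0`. -/
theorem reduced_form_entries_reachability {V : Type*} [Fintype V] [DecidableEq V]
    (R : V → V → Prop) (hacyc : Irreflexive (Relation.TransGen R))
    (M : Matrix V V ℝ) (hsupp : ∀ u v : V, M u v ≠ 0 → R u v) :
    (∀ u : V, (1 - M)⁻¹ u u = 1) ∧
    (∀ u v : V, u ≠ v → ¬ Relation.TransGen R u v → (1 - M)⁻¹ u v = 0) := by
  have : Std.Irrefl (Relation.TransGen R) := ⟨hacyc⟩
  refine ⟨fun u => ?_, fun u v hne huv => ?_⟩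
  · rw [Matrix.inv_one_sub_apply_of_not_transGen hsupp (hacyc u), Matrix.one_apply_eq]
  · rw [Matrix.inv_one_sub_apply_of_not_transGen hsupp huv, Matrix.one_apply_ne hne]
end

section
/- Jacobian entry identity underlying Reduced HTC soundness: let V be a finite type, R a relation on V whose transitive closure is irreflexive, B a V×V real matrix supported on R, and Ω a symmetric V×V real matrix. Let w, i, r ∈ V with w ≠ i and no R-path of length ≥ 1 from i to w (w is not a descendant of i). Then the function t ↦ Σ(B + t·E_{ri}, Ω)_{w i} is differentiable at t = 0 with derivative equal to Σ(B, Ω)_{w r}. That is, the partial derivative of the covariance entry Σ_{w i} with respect to the edge coefficient B_{r i} equals Σ_{w r} for any non-descendant source w. -/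
open Matrix

/-- The covariance matrix `Σ(B, Ω) = Lᵀ Ω L` with `L = (1 - B)⁻¹`, of the
linear SEM `X = Bᵀ X + ε` with `Cov(ε) = Ω`, where `B j i` is the coefficient
of the edge `j → i`. -/
noncomputable def covMatrix {V : Type*} [Fintype V] [DecidableEq V]
    (B Ω : Matrix V V ℝ) : Matrix V V ℝ :=
  ((1 - B)⁻¹)ᵀ * Ω * (1 - B)⁻¹

/-!
A matrix supported on an acyclic relation is nilpotent (the number of ancestors strictly
increases along each edge), so `L = (1 - B)⁻¹ = ∑ₖ Bᵏ` and `L u v` vanishes unless `u = v`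
or `v` is a descendant of `u`; in particular `L i w = 0` and `L i i = 1`. The derivative of
`t ↦ (1 - B - t E)⁻¹` at `0` is `L E L`, hence `Σ(B + t E, Ω)` has derivative
`(E L)ᵀ Σ + Σ (E L)`. For `E = E_{ri}` the matrix `E L` is the row `L i` placed in row `r`,
so the `(w, i)` entry of this derivative is `L i w Σ r i + Σ w r L i i = Σ w r`.
-/

open Relation

def ancestors {V : Type*} (R : V → V → Prop) (v : V) : Set V := {x | TransGen R x v}

section Acyclic

variable {V α : Type*} {R : V → V → Prop}

theorem ncard_ancestors_lt_of_rel [Finite V] (hacyc : ∀ w, ¬TransGen R w w) {u v : V}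
    (h : R u v) :
    (ancestors R u).ncard < (ancestors R v).ncard :=
  Set.ncard_lt_ncard ⟨fun _ hx => TransGen.tail hx h, fun hsub => hacyc u (hsub (.single h))⟩

theorem ncard_ancestors_lt_card [Finite V] (hacyc : ∀ w, ¬TransGen R w w) (v : V) :
    (ancestors R v).ncard < Nat.card V :=
  Set.ncard_lt_card fun huniv => hacyc v (huniv ▸ Set.mem_univ v : v ∈ ancestors R v)

variable [Fintype V] [DecidableEq V] [Semiring α] {B : Matrix V V α}

theorem ncard_ancestors_add_le_of_pow_apply_ne_zero (hacyc : ∀ w, ¬TransGen R w w)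
    (hsupp : ∀ u v, B u v ≠ 0 → R u v) (k : ℕ) {u v : V} (h : (B ^ k) u v ≠ 0) :
    (ancestors R u).ncard + k ≤ (ancestors R v).ncard := by
  induction k generalizing v with
  | zero =>
    obtain rfl : u = v := by
      by_contra huv
      exact h (by rw [pow_zero, one_apply_ne huv])
    simp
  | succ k ih =>
    rw [pow_succ, mul_apply] at h
    obtain ⟨x, -, hx⟩ := Finset.exists_ne_zero_of_sum_ne_zero h
    have hux := ih (left_ne_zero_of_mul hx)
    have hxv := ncard_ancestors_lt_of_rel hacyc (hsupp x v (right_ne_zero_of_mul hx))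
    omega

theorem isNilpotent_of_support_acyclic (hacyc : ∀ w, ¬TransGen R w w)
    (hsupp : ∀ u v, B u v ≠ 0 → R u v) : IsNilpotent B := by
  refine ⟨Nat.card V, ext fun u v => by_contra fun h => ?_⟩
  have := ncard_ancestors_add_le_of_pow_apply_ne_zero hacyc hsupp _ h
  have := ncard_ancestors_lt_card hacyc v
  omega

theorem transGen_of_pow_succ_apply_ne_zero (hsupp : ∀ u v, B u v ≠ 0 → R u v) (k : ℕ)
    {u v : V} (h : (B ^ (k + 1)) u v ≠ 0) : TransGen R u v := by
  induction k generalizing u with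
  | zero => exact .single (hsupp u v (by rwa [zero_add, pow_one] at h))
  | succ k ih =>
    rw [pow_succ', mul_apply] at h
    obtain ⟨x, -, hx⟩ := Finset.exists_ne_zero_of_sum_ne_zero h
    exact .head (hsupp u x (left_ne_zero_of_mul hx)) (ih (right_ne_zero_of_mul hx))

end Acyclic

theorem inv_one_sub_apply_of_not_transGen {V α : Type*} [Fintype V] [DecidableEq V]
    [CommRing α] {R : V → V → Prop} {B : Matrix V V α} (hnil : IsNilpotent B)
    (hsupp : ∀ u v, B u v ≠ 0 → R u v) {u v : V} (h : ¬TransGen R u v) :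
    (1 - B)⁻¹ u v = (1 : Matrix V V α) u v := by
  obtain ⟨n, hn⟩ := hnil
  have hinv : (1 - B)⁻¹ = ∑ k ∈ Finset.range (n + 1), B ^ k :=
    inv_eq_right_inv (by rw [mul_neg_geom_sum, pow_succ, hn, zero_mul, sub_zero])
  rw [hinv, Finset.sum_range_succ', pow_zero, Matrix.add_apply, Matrix.sum_apply,
    Finset.sum_eq_zero, zero_add]
  exact fun k _ => by_contra fun hk => h (transGen_of_pow_succ_apply_ne_zero hsupp k hk)

theorem hasDerivAt_ringInverse_add_smul {𝕜 A : Type*} [NontriviallyNormedField 𝕜]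
    [NormedRing A] [HasSummableGeomSeries A] [NormedAlgebra 𝕜 A] {x : A} (hx : IsUnit x) (e : A) :
    HasDerivAt (fun t : 𝕜 => Ring.inverse (x + t • e))
      (-(Ring.inverse x * e * Ring.inverse x)) 0 := by
  obtain ⟨u, rfl⟩ := hx
  have hline : HasDerivAt (fun t : 𝕜 => (u : A) + t • e) e 0 := by
    simpa using ((hasDerivAt_id (0 : 𝕜)).smul_const e).const_add (u : A)
  rw [Ring.inverse_unit]
  exact (hasFDerivAt_ringInverse u).comp_hasDerivAt_of_eq 0 hline (by simp)

section LinftyOp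

attribute [local instance] Matrix.linftyOpNormedRing Matrix.linftyOpNormedAlgebra

theorem hasDerivAt_covMatrix_add_smul_apply {V : Type*} [Fintype V] [DecidableEq V]
    {B : Matrix V V ℝ} (hB : IsUnit (1 - B)) (E Ω : Matrix V V ℝ) (a b : V) :
    HasDerivAt (fun t : ℝ => covMatrix (B + t • E) Ω a b)
      (((E * (1 - B)⁻¹)ᵀ * covMatrix B Ω + covMatrix B Ω * (E * (1 - B)⁻¹)) a b) 0 := by
  set L := (1 - B)⁻¹
  have hL : HasDerivAt (fun t : ℝ => (1 - (B + t • E))⁻¹) (L * E * L) 0 := by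
    have h := hasDerivAt_ringInverse_add_smul (𝕜 := ℝ) hB (-E)
    simp only [← nonsing_inv_eq_ringInverse, smul_neg, ← sub_eq_add_neg,
      sub_sub, mul_neg, neg_mul, neg_neg] at h
    exact h
  have hLT : HasDerivAt (fun t : ℝ => ((1 - (B + t • E))⁻¹)ᵀ) (L * E * L)ᵀ 0 :=
    (transposeLinearEquiv V V ℝ ℝ).toLinearMap.toContinuousLinearMap.hasFDerivAt.comp_hasDerivAt
      0 hL
  have hcov := (entryLinearMap ℝ ℝ a b).toContinuousLinearMap.hasFDerivAt.comp_hasDerivAt 0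
    ((hLT.mul_const Ω).mul hL)
  refine hcov.congr_deriv ?_
  rw [zero_smul, add_zero]
  change ((L * E * L)ᵀ * Ω * L + Lᵀ * Ω * (L * E * L)) a b = _
  simp only [covMatrix, transpose_mul, Matrix.mul_assoc, L]

end LinftyOp

theorem covariance_jacobian_entry_general {V : Type*} [Fintype V] [DecidableEq V]
    (R : V → V → Prop) (hacyc : Irreflexive (Relation.TransGen R))
    (B : Matrix V V ℝ) (hsupp : ∀ u v : V, B u v ≠ 0 → R u v)
    (Ω : Matrix V V ℝ)
    (w i r : V) (hwi : w ≠ i) (hdesc : ¬ Relation.TransGen R i w) :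
    HasDerivAt
      (fun t : ℝ => covMatrix (B + t • Matrix.single r i (1 : ℝ)) Ω w i)
      (covMatrix B Ω w r) 0 := by
  have hnil := isNilpotent_of_support_acyclic hacyc hsupp
  have hL_iw : (1 - B)⁻¹ i w = 0 :=
    (inv_one_sub_apply_of_not_transGen hnil hsupp hdesc).trans (one_apply_ne hwi.symm)
  have hL_ii : (1 - B)⁻¹ i i = 1 :=
    (inv_one_sub_apply_of_not_transGen hnil hsupp (hacyc i)).trans (one_apply_eq i)
  refine (hasDerivAt_covMatrix_add_smul_apply hnil.isUnit_one_sub _ Ω w i).congr_deriv ?_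
  simp [single_mul_eq_updateRow_zero, updateRow_apply, mul_apply, hL_iw, hL_ii]

/-- **Jacobian entry identity underlying Reduced HTC soundness.**
Let `V` be a finite type, `R` a relation on `V` whose transitive closure is
irreflexive, `B` a `V×V` real matrix supported on `R`, and `Ω` a symmetric
`V×V` real matrix.  Let `w, i, r ∈ V` with `w ≠ i` and no `R`-path of length
≥ 1 from `i` to `w` (`w` is not a descendant of `i`).  Then the function
`t ↦ Σ(B + t • E_{ri}, Ω) w i` is differentiable at `t = 0` with derivative
equal to `Σ(B, Ω) w r`: the partial derivative of the covariance entry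
`Σ_{w i}` with respect to the edge coefficient `B_{r i}` equals `Σ_{w r}`
for any non-descendant source `w`. -/
theorem covariance_jacobian_entry {V : Type*} [Fintype V] [DecidableEq V]
    (R : V → V → Prop) (hacyc : Irreflexive (Relation.TransGen R))
    (B : Matrix V V ℝ) (hsupp : ∀ u v : V, B u v ≠ 0 → R u v)
    (Ω : Matrix V V ℝ) (hΩ : Ω.IsSymm)
    (w i r : V) (hwi : w ≠ i) (hdesc : ¬ Relation.TransGen R i w) :
    HasDerivAt
      (fun t : ℝ => covMatrix (B + t • Matrix.single r i (1 : ℝ)) Ω w i)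
      (covMatrix B Ω w r) 0 :=
  covariance_jacobian_entry_general R hacyc B hsupp Ω w i r hwi hdesc
end

section
/- IV Seed Rule (a): let V be a finite type, R a relation on V whose transitive closure is irreflexive, B a V×V real matrix supported on R, and Ω a symmetric V×V real matrix. Suppose Z ∈ V is exogenous: B_{v Z} = 0 for all v (Z has no parents) and Ω_{Z v} = 0 for all v ≠ Z (Z has no siblings). Then, with Σ = Σ(B, Ω): Σ_{Z Z} = Ω_{Z Z}, and for every T ∈ V, Σ_{Z T} = Ω_{Z Z} · L_{Z T}. If moreover Z ≠ T, every R-path of length ≥ 1 from Z to T is the single-edge path Z → T, and Ω_{Z Z} > 0, then B_{Z T} = Σ_{Z T} / Σ_{Z Z} = Cov(Z,T)/Var(Z). -/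
open Matrix

/-- **IV Seed Rule (a).**
Let `V` be a finite type, `R` a relation on `V` whose transitive closure is
irreflexive, `B` a `V×V` real matrix supported on `R`, and `Ω` a symmetric
`V×V` real matrix.  Suppose `Z ∈ V` is exogenous: `B v Z = 0` for all `v`
(`Z` has no parents) and `Ω Z v = 0` for all `v ≠ Z` (`Z` has no siblings).
Then, with `Σ = Σ(B, Ω)` and `L = (1 - B)⁻¹`:
`Σ Z Z = Ω Z Z`, and for every `T`, `Σ Z T = Ω Z Z * L Z T`.
If moreover `Z ≠ T`, every `R`-path of length ≥ 1 from `Z` to `T` is the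
single-edge path `Z → T` (i.e. every nonempty chain from `Z` ending at `T` is
`[T]`), and `Ω Z Z > 0`, then `B Z T = Σ Z T / Σ Z Z = Cov(Z,T)/Var(Z)`. -/
theorem iv_seed_rule_a {V : Type*} [Fintype V] [DecidableEq V]
    (R : V → V → Prop) (hacyc : Irreflexive (Relation.TransGen R))
    (B : Matrix V V ℝ) (hsupp : ∀ u v : V, B u v ≠ 0 → R u v)
    (Ω : Matrix V V ℝ) (hΩ : Ω.IsSymm)
    (Z : V) (hpa : ∀ v : V, B v Z = 0) (hsib : ∀ v : V, v ≠ Z → Ω Z v = 0) :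
    covMatrix B Ω Z Z = Ω Z Z ∧
    (∀ T : V, covMatrix B Ω Z T = Ω Z Z * (1 - B)⁻¹ Z T) ∧
    (∀ T : V, Z ≠ T →
      (∀ (l : List V) (hl : l ≠ []), List.Chain R Z l → l.getLast hl = T →
        l = [T]) →
      0 < Ω Z Z →
      B Z T = covMatrix B Ω Z T / covMatrix B Ω Z Z) := by
  classical
  set n := Fintype.card V + 1 with hn
  -- a rank function
  set f : V → ℕ := fun v => {u | Relation.TransGen R u v}.ncard with hf
  have hmono : ∀ u v, R u v → f u < f v := by
    intro u v huv
    apply Set.ncard_lt_ncard _ (Set.toFinite _)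
    constructor
    · intro x hx
      exact hx.trans (Relation.TransGen.single huv)
    · intro hsub
      exact hacyc u (hsub (Relation.TransGen.single huv))
  have hfle : ∀ v, f v ≤ Fintype.card V := by
    intro v
    have := Set.ncard_le_ncard (Set.subset_univ {u | Relation.TransGen R u v})
      (Set.toFinite _)
    simpa [Set.ncard_univ, Nat.card_eq_fintype_card] using this
  -- entries of powers
  have hstep : ∀ (k : ℕ) (u v : V), (B ^ (k + 1)) u v ≠ 0 →
      ∃ w, B u w ≠ 0 ∧ (B ^ k) w v ≠ 0 := by
    intro k u v h
    rw [pow_succ', Matrix.mul_apply] at h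
    obtain ⟨w, -, hw⟩ := Finset.exists_ne_zero_of_sum_ne_zero h
    exact ⟨w, left_ne_zero_of_mul hw, right_ne_zero_of_mul hw⟩
  have hpow : ∀ (k : ℕ) (u v : V), (B ^ k) u v ≠ 0 → f u + k ≤ f v := by
    intro k
    induction k with
    | zero =>
      intro u v h
      have huv : u = v := by
        by_contra hne
        rw [pow_zero] at h
        exact h (Matrix.one_apply_ne hne)
      simp [huv]
    | succ k ih =>
      intro u v h
      obtain ⟨w, h1, h2⟩ := hstep k u v h
      have := ih w v h2
      have := hmono u w (hsupp u w h1)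
      omega
  have hnil : B ^ n = 0 := by
    ext u v
    by_contra h
    have h1 := hpow n u v h
    have h2 := hfle v
    omega
  -- the Neumann series is the inverse
  set S : Matrix V V ℝ := ∑ k ∈ Finset.range n, B ^ k with hSdef
  have hS : S * (1 - B) = 1 := by
    have hg := geom_sum_mul B n
    have he : S * (1 - B) = -(S * (B - 1)) := by noncomm_ring
    rw [he, hSdef, hg, hnil]
    simp
  have hLdef : (1 - B)⁻¹ = S := Matrix.inv_eq_left_inv hS
  set L : Matrix V V ℝ := (1 - B)⁻¹ with hLset
  have hL1 : L * (1 - B) = 1 := by rw [hLdef]; exact hS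
  -- column Z of L is the standard basis vector
  have hcol : ∀ u, L u Z = if u = Z then 1 else 0 := by
    intro u
    have h := congrArg (fun M => M u Z) hL1
    simp only [Matrix.mul_apply, Matrix.sub_apply, Matrix.one_apply, hpa,
      sub_zero, mul_ite, mul_one, mul_zero] at h
    simpa using h
  have hSig : ∀ T, covMatrix B Ω Z T = Ω Z Z * L Z T := by
    intro T
    simp only [covMatrix, ← hLset]
    rw [Matrix.mul_apply]
    have hrow : ∀ v, (Lᵀ * Ω) Z v = Ω Z v := by
      intro v
      rw [Matrix.mul_apply]
      simp [Matrix.transpose_apply, hcol, ite_mul]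
    rw [Finset.sum_congr rfl fun v _ => by rw [hrow v]]
    rw [Finset.sum_eq_single Z (fun v _ hv => by rw [hsib v hv, zero_mul])
      (fun h => absurd (Finset.mem_univ Z) h)]
  have hSigZZ : covMatrix B Ω Z Z = Ω Z Z := by
    rw [hSig Z, hcol Z]
    simp
  refine ⟨hSigZZ, hSig, ?_⟩
  intro T hZT hchain hOmpos
  -- extract a chain from a nonzero power entry
  have hchainOf : ∀ (k : ℕ) (u v : V), (B ^ k) u v ≠ 0 →
      ∃ l : List V, List.Chain R u l ∧ l.length = k ∧
        ∀ h : l ≠ [], l.getLast h = v := by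
    intro k
    induction k with
    | zero =>
      intro u v h
      exact ⟨[], List.Chain.nil, rfl, fun h => absurd rfl h⟩
    | succ k ih =>
      intro u v h
      obtain ⟨w, h1, h2⟩ := hstep k u v h
      obtain ⟨l, hc, hlen, hlast⟩ := ih w v h2
      refine ⟨w :: l, List.Chain.cons (hsupp u w h1) hc, by simp [hlen], ?_⟩
      intro h'
      cases l with
      | nil =>
        have hk0 : k = 0 := by simpa using hlen.symm
        subst hk0
        have hwv : w = v := by
          by_contra hne
          rw [pow_zero] at h2
          exact h2 (Matrix.one_apply_ne hne)
        simpa using hwv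
      | cons a l' =>
        rw [List.getLast_cons (by simp : (a :: l') ≠ [])]
        exact hlast _
  have hLZT : L Z T = B Z T := by
    rw [hLdef, hSdef]
    rw [Matrix.sum_apply]
    rw [Finset.sum_eq_single 1]
    · rw [pow_one]
    · intro k hk hk1
      by_contra h
      match k, hk1 with
      | 0, _ =>
        rw [pow_zero] at h
        exact h (Matrix.one_apply_ne hZT)
      | (m + 1), hk1 =>
        obtain ⟨l, hc, hlen, hlast⟩ := hchainOf (m + 1) Z T h
        have hlne : l ≠ [] := by
          intro h0
          rw [h0] at hlen
          simp at hlen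
        have := hchain l hlne hc (hlast hlne)
        rw [this] at hlen
        simp at hlen
        omega
    · intro h
      exfalso
      apply h
      simp only [hn, Finset.mem_range]
      have : 0 < Fintype.card V := Fintype.card_pos_iff.mpr ⟨Z⟩
      omega
  rw [hSigZZ, hSig T, hLZT, mul_comm, mul_div_assoc, div_self (ne_of_gt hOmpos),
    mul_one]
end

section
/- IV Seed Rule (b): let V be a finite type, R a relation on V whose transitive closure is irreflexive, B a V×V real matrix supported on R, and Ω a symmetric V×V real matrix. Let Z, T, Y ∈ V be pairwise distinct, and suppose: Z is exogenous (B_{v Z} = 0 for all v and Ω_{Z v} = 0 for all v ≠ Z); every R-path from Z to Y passes through T (exclusion restriction); and every R-path of length ≥ 1 from T to Y is the single-edge path T → Y (no mediating path). Then, with Σ = Σ(B, Ω): Σ_{Z Y} = B_{T Y} · Σ_{Z T}. In particular, if Σ_{Z T} ≠ 0 then B_{T Y} = Σ_{Z Y} / Σ_{Z T} = Cov(Z,Y)/Cov(Z,T). -/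
/-!
Write `L = (1 - B)⁻¹`. As `Z` has no parents, column `Z` of `L` is the unit vector at `Z`, and as
`Z` has no correlated errors, `Σ Z y = Ω Z Z * L Z y`. From `L = 1 + L B` we get
`L Z Y = ∑ w, L Z w * B w Y`, and `L Z w ≠ 0` only when `w` is `R`-reachable from `Z`. A parent
`w ≠ T` of `Y` reachable from `Z` would give a path `Z ⇝ w → Y`, which must pass through `T`,
hence contain a mediating path `T ⇝ w → Y`. So `L Z Y = L Z T * B T Y`. Both the invertibility
of `1 - B` and the support of `L` come from well-founded induction along the acyclic `R`.
-/

open Matrix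

open Relation Finset

theorem wellFounded_of_irrefl_transGen {α : Type*} [Finite α] {R : α → α → Prop}
    [Std.Irrefl (TransGen R)] : WellFounded R :=
  have : IsTrans α (TransGen R) := ⟨fun _ _ _ => TransGen.trans⟩
  Subrelation.wf TransGen.single (Finite.wellFounded_of_trans_of_irrefl _)

theorem eq_of_reflTransGen_of_rel {α : Type*} {R : α → α → Prop} {Z T Y w : α} (hTY : T ≠ Y)
    (hexcl : ∀ l : List α, List.IsChain R (Z :: l) →
      (Z :: l).getLast (List.cons_ne_nil Z l) = Y → T ∈ Z :: l)
    (hmed : ∀ (l : List α) (hl : l ≠ []), List.IsChain R (T :: l) →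
      l.getLast hl = Y → l = [Y])
    (hZw : ReflTransGen R Z w) (hwY : R w Y) : w = T := by
  obtain ⟨l, hchain, rfl⟩ := List.exists_isChain_cons_of_relationReflTransGen hZw
  have hchainY : List.IsChain R (Z :: l ++ [Y]) :=
    hchain.append (.singleton Y) (by simpa [List.getLast?_eq_some_getLast] using hwY)
  have hT : T ∈ Z :: l := by
    simpa [hTY] using hexcl (l ++ [Y]) hchainY (by simp)
  obtain ⟨a, b, hab⟩ := List.append_of_mem hT
  rw [hab, List.append_assoc] at hchainY
  have hb := hmed (b ++ [Y]) (by simp) hchainY.right_of_append (by simp)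
  obtain rfl : b = [] := by simpa using hb
  simp [List.getLast_congr _ _ hab]

section InverseOfOneSub

variable {V K : Type*} [Fintype V] [DecidableEq V] [Field K] {B : Matrix V V K}

theorem eq_zero_of_one_sub_mulVec_eq_zero {R : V → V → Prop} (hwf : WellFounded (flip R))
    (hsupp : ∀ u v, B u v ≠ 0 → R u v) {x : V → K} (hx : (1 - B) *ᵥ x = 0) : x = 0 := by
  suffices ∀ u, x u = 0 from funext this
  intro u
  induction u using hwf.induction with
  | _ u ih =>
  have hu := congrFun hx u
  rw [sub_mulVec, one_mulVec, Pi.sub_apply, Pi.zero_apply, sub_eq_zero] at hu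
  rw [hu, mulVec, dotProduct]
  refine sum_eq_zero fun v _ => ?_
  by_cases huv : B u v = 0
  · rw [huv, zero_mul]
  · rw [ih v (hsupp u v huv), mul_zero]

theorem isUnit_one_sub_of_wellFounded {R : V → V → Prop} (hwf : WellFounded (flip R))
    (hsupp : ∀ u v, B u v ≠ 0 → R u v) : IsUnit (1 - B) := by
  refine mulVec_injective_iff_isUnit.mp fun x y hxy => sub_eq_zero.mp ?_
  exact eq_zero_of_one_sub_mulVec_eq_zero hwf hsupp (by rw [mulVec_sub, hxy, sub_self])

theorem inv_one_sub_apply (hB : IsUnit (1 - B)) (u v : V) :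
    (1 - B)⁻¹ u v = (1 : Matrix V V K) u v + ∑ w, (1 - B)⁻¹ u w * B w v := by
  have := nonsing_inv_mul _ ((isUnit_iff_isUnit_det _).mp hB)
  rw [mul_sub, mul_one, sub_eq_iff_eq_add] at this
  rw [← mul_apply, ← Matrix.add_apply, ← this]

theorem inv_one_sub_apply_of_col_eq_zero (hB : IsUnit (1 - B)) {z : V} (hz : ∀ v, B v z = 0)
    (u : V) : (1 - B)⁻¹ u z = (1 : Matrix V V K) u z := by
  rw [inv_one_sub_apply hB]
  simp [hz]

theorem reflTransGen_of_inv_one_sub_apply_ne_zero {R : V → V → Prop} (hwf : WellFounded R)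
    (hsupp : ∀ u v, B u v ≠ 0 → R u v) (hB : IsUnit (1 - B)) {u w : V}
    (h : (1 - B)⁻¹ u w ≠ 0) : ReflTransGen R u w := by
  induction w using hwf.induction with
  | _ w ih =>
  obtain rfl | huw := eq_or_ne u w
  · exact .refl
  rw [inv_one_sub_apply hB, one_apply_ne huw, zero_add] at h
  obtain ⟨x, -, hx⟩ := exists_ne_zero_of_sum_ne_zero h
  have hxw := hsupp x w (right_ne_zero_of_mul hx)
  exact (ih x hxw (left_ne_zero_of_mul hx)).tail hxw

theorem inv_one_sub_apply_eq_mul (hB : IsUnit (1 - B)) {u v t : V} (huv : u ≠ v)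
    (h : ∀ w ≠ t, (1 - B)⁻¹ u w * B w v = 0) :
    (1 - B)⁻¹ u v = (1 - B)⁻¹ u t * B t v := by
  rw [inv_one_sub_apply hB, one_apply_ne huv, zero_add,
    sum_eq_single t (fun w _ hw => h w hw) (by simp)]

end InverseOfOneSub

theorem covMatrix_apply_of_exogenous {V : Type*} [Fintype V] [DecidableEq V]
    {B Ω : Matrix V V ℝ} (hB : IsUnit (1 - B)) {z : V} (hpa : ∀ v, B v z = 0)
    (hsib : ∀ v, v ≠ z → Ω z v = 0) (y : V) :
    covMatrix B Ω z y = Ω z z * (1 - B)⁻¹ z y := by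
  have hrow (v : V) : (((1 - B)⁻¹)ᵀ * Ω : Matrix V V ℝ) z v = Ω z v := by
    simp [mul_apply, inv_one_sub_apply_of_col_eq_zero hB hpa, one_apply]
  rw [covMatrix, mul_apply, sum_eq_single z (fun v _ hv => by rw [hrow, hsib v hv, zero_mul])
    (by simp), hrow]

theorem iv_seed_rule_b_general {V : Type*} [Fintype V] [DecidableEq V]
    (R : V → V → Prop) (hacyc : Irreflexive (Relation.TransGen R))
    (B : Matrix V V ℝ) (hsupp : ∀ u v : V, B u v ≠ 0 → R u v)
    (Ω : Matrix V V ℝ)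
    (Z T Y : V) (hZY : Z ≠ Y) (hTY : T ≠ Y)
    (hpa : ∀ v : V, B v Z = 0) (hsib : ∀ v : V, v ≠ Z → Ω Z v = 0)
    (hexcl : ∀ l : List V, List.Chain R Z l →
      (Z :: l).getLast (List.cons_ne_nil Z l) = Y → T ∈ Z :: l)
    (hmed : ∀ (l : List V) (hl : l ≠ []), List.Chain R T l →
      l.getLast hl = Y → l = [Y]) :
    covMatrix B Ω Z Y = B T Y * covMatrix B Ω Z T ∧
    (covMatrix B Ω Z T ≠ 0 →
      B T Y = covMatrix B Ω Z Y / covMatrix B Ω Z T) := by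
  have : Std.Irrefl (TransGen R) := ⟨hacyc⟩
  have hwf : WellFounded R := wellFounded_of_irrefl_transGen
  have : Std.Irrefl (TransGen (flip R)) := ⟨fun x h => hacyc x (transGen_swap.mp h)⟩
  have hB : IsUnit (1 - B) := isUnit_one_sub_of_wellFounded wellFounded_of_irrefl_transGen hsupp
  have hL : (1 - B)⁻¹ Z Y = (1 - B)⁻¹ Z T * B T Y := by
    refine inv_one_sub_apply_eq_mul hB hZY fun w hwT => ?_
    by_contra h
    exact hwT <| eq_of_reflTransGen_of_rel hTY hexcl hmed
      (reflTransGen_of_inv_one_sub_apply_ne_zero hwf hsupp hB (left_ne_zero_of_mul h))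
      (hsupp w Y (right_ne_zero_of_mul h))
  have hmain : covMatrix B Ω Z Y = B T Y * covMatrix B Ω Z T := by
    rw [covMatrix_apply_of_exogenous hB hpa hsib, covMatrix_apply_of_exogenous hB hpa hsib,
      hL]
    ring
  exact ⟨hmain, fun h => by rw [hmain, mul_div_cancel_right₀ _ h]⟩

/-- **IV Seed Rule (b).**
Let `V` be a finite type, `R` a relation on `V` whose transitive closure is
irreflexive, `B` a `V×V` real matrix supported on `R`, and `Ω` a symmetric
`V×V` real matrix.  Let `Z, T, Y ∈ V` be pairwise distinct and suppose:
`Z` is exogenous (`B v Z = 0` for all `v` and `Ω Z v = 0` for all `v ≠ Z`);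
every `R`-path from `Z` to `Y` passes through `T` (exclusion restriction:
an `R`-path from `Z` to `Y` is encoded by the list `l` of vertices after `Z`,
with `List.Chain R Z l` and last vertex of `Z :: l` equal to `Y`, and it
passes through `T` iff `T ∈ Z :: l`); and every `R`-path of length ≥ 1 from
`T` to `Y` is the single-edge path `T → Y` (no mediating path).  Then, with
`Σ = Σ(B, Ω)`: `Σ Z Y = B T Y * Σ Z T`.  In particular, if `Σ Z T ≠ 0` then
`B T Y = Σ Z Y / Σ Z T = Cov(Z,Y)/Cov(Z,T)`. -/
theorem iv_seed_rule_b {V : Type*} [Fintype V] [DecidableEq V]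
    (R : V → V → Prop) (hacyc : Irreflexive (Relation.TransGen R))
    (B : Matrix V V ℝ) (hsupp : ∀ u v : V, B u v ≠ 0 → R u v)
    (Ω : Matrix V V ℝ) (hΩ : Ω.IsSymm)
    (Z T Y : V) (hZT : Z ≠ T) (hZY : Z ≠ Y) (hTY : T ≠ Y)
    (hpa : ∀ v : V, B v Z = 0) (hsib : ∀ v : V, v ≠ Z → Ω Z v = 0)
    (hexcl : ∀ l : List V, List.Chain R Z l →
      (Z :: l).getLast (List.cons_ne_nil Z l) = Y → T ∈ Z :: l)
    (hmed : ∀ (l : List V) (hl : l ≠ []), List.Chain R T l →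
      l.getLast hl = Y → l = [Y]) :
    covMatrix B Ω Z Y = B T Y * covMatrix B Ω Z T ∧
    (covMatrix B Ω Z T ≠ 0 →
      B T Y = covMatrix B Ω Z Y / covMatrix B Ω Z T) :=
  iv_seed_rule_b_general R hacyc B hsupp Ω Z T Y hZY hTY hpa hsib hexcl hmed
end
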